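/- arXiv:1204.1233 — 2 statements merged into one kernel-verified Lean document; each statement's English description precedes it below -/
import Mathlib

section
/- Let γ > 0, d ≥ 1, and θ = γ^{-1} d^{1-1/γ}. Then the function p(x_1, y_1, x_2, y_2) = γ² exp{-γ(y_1 + y_2 + θ|x_1| + θ|x_2|) - 2^d (γθ)^{-d} e^{-γ y_2}} · 1{y_1 > y_2} is a probability density on R^d × R × R^d × R, i.e., its integral equals 1. -/
/-!
Put `a = γθ > 0` and `c = 2^d a^{-d}`, which is the integral of `x ↦ exp (-a |x|)` over `ℝ^d`.
On `{y₁ > y₂}` the density factors as `e^{-a|x₁|} γ e^{-γ y₁} · e^{-a|x₂|} ψ(y₂)`, where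
`ψ(y) = γ e^{-γ y} exp (-c e^{-γ y})` has primitive `c⁻¹ exp (-c e^{-γ y})` (a Gumbel distribution
function). Integrating out `(x₂, y₂)` over `y₂ < y₁` therefore leaves `e^{-a|x₁|} ψ(y₁)`, whose
integral is `c · c⁻¹ = 1`. The same slice computation, applied to the nonnegative integrand,
gives its integrability.
-/

open MeasureTheory Real Set Filter Topology

theorem integrableOn_Iic_deriv_of_nonneg' {g g' : ℝ → ℝ} {a l : ℝ}
    (hderiv : ∀ x ∈ Iic a, HasDerivAt g (g' x) x) (g'pos : ∀ x ∈ Iic a, 0 ≤ g' x)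
    (hg : Tendsto g atBot (𝓝 l)) : IntegrableOn g' (Iic a) := by
  have hmirror : IntegrableOn (fun x => g' (-x)) (Ioi (-a)) := by
    refine integrableOn_Ioi_deriv_of_nonneg' (g := fun x => -g (-x)) (fun x hx => ?_)
      (fun x hx => g'pos (-x) (neg_le.1 (mem_Ioi.1 hx).le)) (hg.comp tendsto_neg_atTop_atBot).neg
    exact (((hderiv (-x) (neg_le.1 (mem_Ici.1 hx))).comp x (hasDerivAt_neg x)).neg).congr_deriv
      (by ring)
  simpa using (Iff.mpr integrableOn_Ici_iff_integrableOn_Ioi hmirror).comp_neg_Iic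

theorem integrable_deriv_of_nonneg {g g' : ℝ → ℝ} {l m : ℝ}
    (hderiv : ∀ x, HasDerivAt g (g' x) x) (g'pos : ∀ x, 0 ≤ g' x)
    (hbot : Tendsto g atBot (𝓝 l)) (htop : Tendsto g atTop (𝓝 m)) : Integrable g' := by
  rw [← integrableOn_univ, ← Iic_union_Ioi (a := 0)]
  exact (integrableOn_Iic_deriv_of_nonneg' (fun x _ => hderiv x) (fun x _ => g'pos x) hbot).union
    (integrableOn_Ioi_deriv_of_nonneg' (fun x _ => hderiv x) (fun x _ => g'pos x) htop)

/-- `c⁻¹` times the density of the Gumbel law with rate `γ` and location `log c / γ`. -/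
noncomputable def gumbelKernel (γ c y : ℝ) : ℝ := γ * exp (-γ * y) * exp (-c * exp (-γ * y))

section Gumbel

variable {γ c : ℝ}

theorem gumbelKernel_nonneg (hγ : 0 < γ) (y : ℝ) : 0 ≤ gumbelKernel γ c y := by
  unfold gumbelKernel; positivity

theorem hasDerivAt_inv_mul_exp_neg_mul_exp (hc : c ≠ 0) (y : ℝ) :
    HasDerivAt (fun y => c⁻¹ * exp (-c * exp (-γ * y))) (gumbelKernel γ c y) y := by
  have hlin : HasDerivAt (fun y => -γ * y) (-γ) y := by
    simpa using (hasDerivAt_id y).const_mul (-γ)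
  refine (((hlin.exp.const_mul (-c)).exp).const_mul c⁻¹).congr_deriv ?_
  unfold gumbelKernel
  field_simp

theorem tendsto_inv_mul_exp_neg_mul_exp_atBot (hγ : 0 < γ) (hc : 0 < c) :
    Tendsto (fun y => c⁻¹ * exp (-c * exp (-γ * y))) atBot (𝓝 0) := by
  have hinner : Tendsto (fun y => -c * exp (-γ * y)) atBot atBot :=
    (tendsto_const_mul_atBot_of_neg (neg_lt_zero.2 hc)).2 <| tendsto_exp_atTop.comp <|
      (tendsto_const_mul_atTop_of_neg (neg_lt_zero.2 hγ)).2 tendsto_id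
  simpa using (tendsto_exp_atBot.comp hinner).const_mul c⁻¹

theorem tendsto_inv_mul_exp_neg_mul_exp_atTop (hγ : 0 < γ) :
    Tendsto (fun y => c⁻¹ * exp (-c * exp (-γ * y))) atTop (𝓝 c⁻¹) := by
  have hinner : Tendsto (fun y => -c * exp (-γ * y)) atTop (𝓝 0) := by
    simpa using (tendsto_exp_atBot.comp <|
      (tendsto_const_mul_atBot_of_neg (neg_lt_zero.2 hγ)).2 tendsto_id).const_mul (-c)
  simpa using ((continuous_exp.tendsto 0).comp hinner).const_mul c⁻¹

theorem integrable_gumbelKernel (hγ : 0 < γ) (hc : 0 < c) : Integrable (gumbelKernel γ c) :=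
  integrable_deriv_of_nonneg (hasDerivAt_inv_mul_exp_neg_mul_exp hc.ne') (gumbelKernel_nonneg hγ)
    (tendsto_inv_mul_exp_neg_mul_exp_atBot hγ hc) (tendsto_inv_mul_exp_neg_mul_exp_atTop hγ)

theorem integral_Iio_gumbelKernel (hγ : 0 < γ) (hc : 0 < c) (b : ℝ) :
    ∫ y in Iio b, gumbelKernel γ c y = c⁻¹ * exp (-c * exp (-γ * b)) := by
  rw [← integral_Iic_eq_integral_Iio, integral_Iic_of_hasDerivAt_of_tendsto'
    (fun y _ => hasDerivAt_inv_mul_exp_neg_mul_exp hc.ne' y)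
    (integrable_gumbelKernel hγ hc).integrableOn (tendsto_inv_mul_exp_neg_mul_exp_atBot hγ hc),
    sub_zero]

theorem integral_gumbelKernel (hγ : 0 < γ) (hc : 0 < c) : ∫ y, gumbelKernel γ c y = c⁻¹ := by
  rw [integral_of_hasDerivAt_of_tendsto (hasDerivAt_inv_mul_exp_neg_mul_exp hc.ne')
    (integrable_gumbelKernel hγ hc) (tendsto_inv_mul_exp_neg_mul_exp_atBot hγ hc)
    (tendsto_inv_mul_exp_neg_mul_exp_atTop hγ), sub_zero]

end Gumbel

section Laplace

variable {a : ℝ}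

theorem integral_exp_neg_mul_abs (ha : 0 < a) : ∫ t, exp (-a * |t|) = 2 / a := by
  rw [integral_comp_abs (f := fun t => exp (-a * t)), integral_exp_mul_Ioi (neg_neg_of_pos ha),
    mul_zero, exp_zero, neg_div_neg_eq, mul_one_div]

theorem integrable_exp_neg_mul_abs (ha : 0 < a) : Integrable fun t : ℝ => exp (-a * |t|) :=
  Integrable.of_integral_ne_zero (by rw [integral_exp_neg_mul_abs ha]; positivity)

theorem exp_neg_mul_sum_abs {ι : Type*} [Fintype ι] (x : ι → ℝ) :
    exp (-a * ∑ i, |x i|) = ∏ i, exp (-a * |x i|) := by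
  rw [Finset.mul_sum, exp_sum]

theorem integrable_exp_neg_mul_sum_abs {ι : Type*} [Fintype ι] (ha : 0 < a) :
    Integrable fun x : ι → ℝ => exp (-a * ∑ i, |x i|) := by
  simp_rw [exp_neg_mul_sum_abs]
  exact Integrable.fintype_prod fun _ => integrable_exp_neg_mul_abs ha

theorem integral_exp_neg_mul_sum_abs {ι : Type*} [Fintype ι] (ha : 0 < a) :
    ∫ x : ι → ℝ, exp (-a * ∑ i, |x i|) = (2 / a) ^ Fintype.card ι := by
  simp only [exp_neg_mul_sum_abs]
  rw [integral_fintype_prod_volume_eq_pow (fun t => exp (-a * |t|)), integral_exp_neg_mul_abs ha]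

end Laplace

theorem ite_snd_lt_eq_indicator {E : Type*} (f : E × ℝ → ℝ) (b : ℝ) :
    (fun p => if p.2 < b then f p else 0) = (univ ×ˢ Iio b).indicator f := by
  ext p
  simp [indicator]

section Product

variable {E : Type*} [MeasurableSpace E] {μ : Measure E} {ν : Measure ℝ}

theorem integral_ite_snd_lt_mul [SFinite μ] [SFinite ν] (Φ : E → ℝ) (ψ : ℝ → ℝ) (b : ℝ) :
    ∫ p, (if p.2 < b then Φ p.1 * ψ p.2 else 0) ∂μ.prod ν =
      (∫ x, Φ x ∂μ) * ∫ y in Iio b, ψ y ∂ν := by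
  rw [ite_snd_lt_eq_indicator, integral_indicator (MeasurableSet.univ.prod measurableSet_Iio),
    setIntegral_prod_mul, Measure.restrict_univ]

theorem integrable_ite_snd_lt_mul {Φ : E → ℝ} {ψ : ℝ → ℝ} (hΦ : Integrable Φ μ)
    (hψ : Integrable ψ ν) (b : ℝ) :
    Integrable (fun p => if p.2 < b then Φ p.1 * ψ p.2 else 0) (μ.prod ν) := by
  rw [ite_snd_lt_eq_indicator]
  exact (hΦ.mul_prod hψ).indicator (MeasurableSet.univ.prod measurableSet_Iio)

end Product

theorem integral_ite_lt_mul_gumbelKernel {E : Type*} [MeasurableSpace E] {μ : Measure E}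
    [SFinite μ] {Φ : E → ℝ} (hΦ : Integrable Φ μ) (hΦ0 : 0 ≤ Φ) {γ c : ℝ} (hγ : 0 < γ)
    (hΦc : ∫ x, Φ x ∂μ = c) (hc : 0 < c) :
    ∫ q, (if q.2.2 < q.1.2 then
        Φ q.1.1 * (γ * exp (-γ * q.1.2)) * (Φ q.2.1 * gumbelKernel γ c q.2.2) else 0)
      ∂(μ.prod volume).prod (μ.prod volume) = 1 := by
  set F : (E × ℝ) × (E × ℝ) → ℝ := fun q => if q.2.2 < q.1.2 then
    Φ q.1.1 * (γ * exp (-γ * q.1.2)) * (Φ q.2.1 * gumbelKernel γ c q.2.2) else 0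
  have hslice (p : E × ℝ) : (fun p' => F (p, p')) = fun p' => Φ p.1 * (γ * exp (-γ * p.2)) *
      (if p'.2 < p.2 then Φ p'.1 * gumbelKernel γ c p'.2 else 0) := by
    ext p'
    simp only [F, mul_ite, mul_zero]
  have hinner (p : E × ℝ) :
      ∫ p', F (p, p') ∂μ.prod volume = Φ p.1 * gumbelKernel γ c p.2 := by
    rw [hslice, integral_const_mul, integral_ite_snd_lt_mul, hΦc, integral_Iio_gumbelKernel hγ hc]
    unfold gumbelKernel
    field_simp
  have hF0 : 0 ≤ F := fun q => by
    dsimp only [F]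
    split_ifs
    · exact mul_nonneg (mul_nonneg (hΦ0 _) (by positivity))
        (mul_nonneg (hΦ0 _) (gumbelKernel_nonneg hγ _))
    · exact le_rfl
  have hFmeas : AEStronglyMeasurable F ((μ.prod volume).prod (μ.prod volume)) := by
    have hleft : AEStronglyMeasurable (fun p : E × ℝ => Φ p.1 * (γ * exp (-γ * p.2)))
        (μ.prod volume) :=
      hΦ.aestronglyMeasurable.comp_fst.mul (by fun_prop)
    have hright : AEStronglyMeasurable (fun p : E × ℝ => Φ p.1 * gumbelKernel γ c p.2)
        (μ.prod volume) :=
      (hΦ.mul_prod (integrable_gumbelKernel hγ hc)).aestronglyMeasurable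
    convert (hleft.comp_fst.mul hright.comp_snd).indicator
      (measurableSet_lt measurable_snd.snd measurable_fst.snd) using 1
    ext q
    simp [F, indicator]
  have hF : Integrable F ((μ.prod volume).prod (μ.prod volume)) := by
    refine (integrable_prod_iff hFmeas).2 ⟨ae_of_all _ fun p => ?_, ?_⟩
    · rw [hslice]
      exact (integrable_ite_snd_lt_mul hΦ (integrable_gumbelKernel hγ hc) p.2).const_mul _
    · simp_rw [fun q => Real.norm_of_nonneg (hF0 q), hinner]
      exact hΦ.mul_prod (integrable_gumbelKernel hγ hc)
  calc ∫ q, F q ∂(μ.prod volume).prod (μ.prod volume)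
      = ∫ p, ∫ p', F (p, p') ∂μ.prod volume ∂μ.prod volume := integral_prod F hF
    _ = ∫ p, Φ p.1 * gumbelKernel γ c p.2 ∂μ.prod volume := by simp_rw [hinner]
    _ = c * c⁻¹ := by rw [integral_prod_mul, hΦc, integral_gumbelKernel hγ hc]
    _ = 1 := mul_inv_cancel₀ hc.ne'

/-- The function
`p(x₁,y₁,x₂,y₂) = γ² exp{-γ(y₁+y₂+θ|x₁|+θ|x₂|) - 2^d (γθ)^{-d} e^{-γ y₂}} 1_{y₁ > y₂}`
is a probability density on `ℝ^d × ℝ × ℝ^d × ℝ`. -/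
theorem joint_density_integrates_to_one
    (d : ℕ) (hd : 1 ≤ d) (γ : ℝ) (hγ : 0 < γ) (θ : ℝ)
    (hθ : θ = γ⁻¹ * (d : ℝ) ^ (1 - 1 / γ)) :
    ∫ q : ((Fin d → ℝ) × ℝ) × ((Fin d → ℝ) × ℝ),
      (if q.2.2 < q.1.2 then
        γ ^ 2 * exp (-γ * (q.1.2 + q.2.2 + θ * ∑ i, |q.1.1 i| + θ * ∑ i, |q.2.1 i|)
          - 2 ^ d * (γ * θ) ^ (-(d : ℤ)) * exp (-γ * q.2.2))
      else 0) = 1 := by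
  have hθ0 : 0 < θ := hθ ▸ mul_pos (inv_pos.2 hγ) (rpow_pos_of_pos (by exact_mod_cast hd) _)
  have ha : 0 < γ * θ := mul_pos hγ hθ0
  have hΦc : ∫ x : Fin d → ℝ, exp (-(γ * θ) * ∑ i, |x i|) = 2 ^ d * (γ * θ) ^ (-(d : ℤ)) := by
    rw [integral_exp_neg_mul_sum_abs ha, Fintype.card_fin, zpow_neg, zpow_natCast, div_pow,
      div_eq_mul_inv]
  rw [← integral_ite_lt_mul_gumbelKernel (integrable_exp_neg_mul_sum_abs ha)
    (fun x => (exp_pos _).le) hγ hΦc (by positivity)]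
  congr 1
  ext q
  split_ifs
  · simp only [gumbelKernel, sub_eq_add_neg, mul_add, exp_add, neg_mul, mul_assoc]
    ring
  · rfl
end

section
/- Let {ξ(z) : z ∈ Z^d} be i.i.d. Weibull(γ) random variables, γ > 0, and let ξ_r^{(k)} denote the k-th largest value of ξ over the l^1-ball of radius r. Then for each κ ∈ (0, d), almost surely ξ_r^{(⌊r^κ⌋)} / ((d - κ) log r)^{1/γ} → 1 as r → ∞. -/
/-!
Write `k = ⌊r ^ κ⌋`. A site exceeds `(a log n) ^ (1 / γ)` with probability `n ^ (-a)`, so by a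
union bound over `k`-subsets the probability that at least `k` of the `≍ n ^ d` sites of the ball
of radius `n` do so is at most `C(N, k) n ^ (-a k) ≤ (e N n ^ (-a) / k) ^ k`, summable in `n` as
soon as `a > d - κ`. Dually, for `b < d - κ` the expected number of sites above
`(b log n) ^ (1 / γ)` is `≍ n ^ (d - b) ≫ k`, and the probability that fewer than `k` of them are
above is at most `N ^ k exp (-N n ^ (-b) / 2)`, again summable. Borel–Cantelli along integer radii
and monotonicity in `r` in between squeeze `ξ_r^{(k)}` between `(b log r) ^ (1 / γ)` and
`(a log r) ^ (1 / γ)` eventually, almost surely; letting `a, b → d - κ` along a sequence gives the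
limit.
-/

open MeasureTheory ProbabilityTheory Real Filter Finset
open scoped ENNReal Nat Topology

namespace WeibullOrderStatistic

def ball (d : ℕ) (r : ℝ) : Set (Fin d → ℤ) := {z | ((∑ i, |z i| : ℤ) : ℝ) ≤ r}

noncomputable def cube (d : ℕ) (a : ℤ) (m : ℕ) : Finset (Fin d → ℤ) :=
  Fintype.piFinset fun _ => Finset.Ico a (a + m)

lemma mem_cube {d : ℕ} {a : ℤ} {m : ℕ} {z : Fin d → ℤ} :
    z ∈ cube d a m ↔ ∀ i, a ≤ z i ∧ z i < a + m := by
  simp [cube]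

lemma card_cube (d : ℕ) (a : ℤ) (m : ℕ) : #(cube d a m) = m ^ d := by
  simp [cube, Fintype.card_piFinset, Int.card_Ico]

lemma ball_subset_cube (d : ℕ) {r : ℝ} {n : ℕ} (hr : r < n + 1) :
    ball d r ⊆ cube d (-n) (2 * n + 1) := by
  intro z (hz : ((∑ i, |z i| : ℤ) : ℝ) ≤ r)
  have hsum : ∑ i, |z i| ≤ n := by
    have : ((∑ i, |z i| : ℤ) : ℝ) < ((n + 1 : ℤ) : ℝ) := by push_cast at hz ⊢; linarith
    exact Int.lt_add_one_iff.mp (by exact_mod_cast this)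
  refine mem_cube.2 fun i => ?_
  have := abs_le.mp ((single_le_sum (fun j _ => abs_nonneg (z j)) (mem_univ i)).trans hsum)
  push_cast
  constructor <;> linarith [this.1, this.2]

lemma ball_mono (d : ℕ) {r s : ℝ} (h : r ≤ s) : ball d r ⊆ ball d s :=
  fun _ hz => le_trans hz h

lemma ball_finite (d : ℕ) (r : ℝ) : (ball d r).Finite :=
  (cube d _ _).finite_toSet.subset (ball_subset_cube d (Nat.lt_floor_add_one r))

lemma cube_subset_ball (d n : ℕ) : ↑(cube d 0 (n / d + 1)) ⊆ ball d n := by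
  intro z hz
  have hz := mem_cube.1 hz
  have hsum : ∑ i, |z i| ≤ d * (n / d : ℕ) := by
    calc ∑ i, |z i| ≤ ∑ _i : Fin d, ((n / d : ℕ) : ℤ) :=
          sum_le_sum fun i _ => by rw [abs_of_nonneg (hz i).1]; have := (hz i).2; omega
      _ = d * (n / d : ℕ) := by simp
  have : ∑ i, |z i| ≤ n := hsum.trans (by exact_mod_cast Nat.mul_div_le n d)
  show ((∑ i, |z i| : ℤ) : ℝ) ≤ n
  exact_mod_cast this

section Independent

variable {ι β Ω : Type*} [MeasurableSpace β] [MeasurableSpace Ω] {μ : Measure Ω}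

lemma measure_le_ncard_le_choose_mul_pow {ξ : ι → Ω → β} (hξ : iIndepFun ξ μ) (P : Finset ι)
    (c : ℕ) {A : Set β} (hA : MeasurableSet A) {q : ℝ} (hq0 : 0 ≤ q)
    (hq : ∀ i, μ (ξ i ⁻¹' A) ≤ ENNReal.ofReal q) :
    μ {ω | c ≤ {i ∈ (P : Set ι) | ξ i ω ∈ A}.ncard}
      ≤ ENNReal.ofReal ((#P).choose c * q ^ c) := by
  have hcover : {ω | c ≤ {i ∈ (P : Set ι) | ξ i ω ∈ A}.ncard} ⊆
      ⋃ S ∈ P.powersetCard c, ⋂ i ∈ S, ξ i ⁻¹' A := by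
    intro ω hω
    obtain ⟨T, hTP, hTc⟩ := Set.exists_subset_card_eq hω
    have hT : T.Finite := P.finite_toSet.subset fun i hi => (hTP hi).1
    refine Set.mem_biUnion (x := hT.toFinset) ?_ (Set.mem_iInter₂.2 fun i hi => ?_)
    · rw [mem_coe, mem_powersetCard, ← Set.ncard_eq_toFinset_card T hT]
      exact ⟨fun i hi => (hTP (hT.mem_toFinset.1 hi)).1, hTc⟩
    · exact (hTP (hT.mem_toFinset.1 hi)).2
  calc μ {ω | c ≤ {i ∈ (P : Set ι) | ξ i ω ∈ A}.ncard}
      ≤ ∑ S ∈ P.powersetCard c, μ (⋂ i ∈ S, ξ i ⁻¹' A) :=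
        (measure_mono hcover).trans (measure_biUnion_finset_le _ _)
    _ ≤ ∑ _S ∈ P.powersetCard c, ENNReal.ofReal q ^ c := by
        refine sum_le_sum fun S hS => ?_
        rw [hξ.meas_biInter fun i _ => ⟨A, hA, rfl⟩, ← (mem_powersetCard.1 hS).2,
          ← prod_const]
        exact prod_le_prod' fun i _ => hq i
    _ = ENNReal.ofReal ((#P).choose c * q ^ c) := by
        rw [sum_const, card_powersetCard, nsmul_eq_mul, ENNReal.ofReal_mul (by positivity),
          ENNReal.ofReal_pow hq0, ENNReal.ofReal_natCast]

lemma ae_eventually_notMem_of_summable [IsFiniteMeasure μ] {s : ℕ → Set Ω} {f : ℕ → ℝ}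
    (hf : Summable f) (h : ∀ᶠ n in atTop, μ (s n) ≤ ENNReal.ofReal (f n)) :
    ∀ᵐ ω ∂μ, ∀ᶠ n in atTop, ω ∉ s n := by
  have hs : Summable fun n => μ.real (s n) := by
    refine Summable.of_norm_bounded_eventually_nat hf.abs (h.mono fun n hn => ?_)
    rw [Real.norm_of_nonneg measureReal_nonneg]
    calc μ.real (s n) ≤ (ENNReal.ofReal (f n)).toReal :=
          ENNReal.toReal_mono ENNReal.ofReal_ne_top hn
      _ ≤ |f n| := by
        rw [ENNReal.toReal_ofReal']; exact max_le (le_abs_self _) (abs_nonneg _)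
  refine ae_eventually_notMem
    (ne_of_eq_of_ne ?_ (ENNReal.ofReal_ne_top (r := ∑' n, μ.real (s n))))
  rw [ENNReal.ofReal_tsum_of_nonneg (fun _ => measureReal_nonneg) hs]
  exact tsum_congr fun n => (ofReal_measureReal).symm

end Independent

section Weibull

variable {Ω : Type*} [MeasurableSpace Ω] {μ : Measure Ω} {Y : Ω → ℝ} {γ : ℝ}

def IsWeibull (μ : Measure Ω) (Y : Ω → ℝ) (γ : ℝ) : Prop :=
  ∀ x : ℝ, 0 ≤ x → μ {ω | Y ω < x} = ENNReal.ofReal (1 - exp (-(x ^ γ)))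

lemma IsWeibull.measure_lt_rpow_eq (hY : IsWeibull μ Y γ) (hγ : 0 < γ) {s : ℝ} (hs : 0 ≤ s) :
    μ (Y ⁻¹' Set.Iio (s ^ (1 / γ))) = ENNReal.ofReal (1 - exp (-s)) := by
  have h := hY _ (rpow_nonneg hs (1 / γ))
  rw [one_div, rpow_inv_rpow hs hγ.ne'] at h
  rwa [one_div]

lemma IsWeibull.measure_ge_rpow_eq [IsProbabilityMeasure μ] (hY : IsWeibull μ Y γ)
    (hYm : Measurable Y) (hγ : 0 < γ) {s : ℝ} (hs : 0 ≤ s) :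
    μ (Y ⁻¹' Set.Ici (s ^ (1 / γ))) = ENNReal.ofReal (exp (-s)) := by
  rw [← Set.compl_Iio, Set.preimage_compl, prob_compl_eq_one_sub (hYm measurableSet_Iio),
    hY.measure_lt_rpow_eq hγ hs, ← ENNReal.ofReal_one,
    ← ENNReal.ofReal_sub _ (sub_nonneg.2 (exp_le_one_iff.2 (neg_nonpos.2 hs))), sub_sub_cancel]

lemma IsWeibull.measure_lt_rpow_le (hY : IsWeibull μ Y γ) (hγ : 0 < γ) {s : ℝ} (hs : 0 ≤ s) :
    μ (Y ⁻¹' Set.Iio (s ^ (1 / γ))) ≤ ENNReal.ofReal (exp (-exp (-s))) := by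
  rw [hY.measure_lt_rpow_eq hγ hs]
  exact ENNReal.ofReal_le_ofReal (by linarith [add_one_le_exp (-exp (-s))])

end Weibull

lemma choose_mul_pow_le (N k : ℕ) {p : ℝ} (hp : 0 ≤ p) :
    (N.choose k : ℝ) * p ^ k ≤ (exp 1 * N * p / k) ^ k := by
  rcases Nat.eq_zero_or_pos k with rfl | hk
  · simp
  have hkpos : (0 : ℝ) < k := by exact_mod_cast hk
  have hfact : (k : ℝ) ^ k ≤ exp 1 ^ k * k ! := by
    rw [← exp_nat_mul, mul_one, ← div_le_iff₀ (by positivity)]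
    exact pow_div_factorial_le_exp (k : ℝ) hkpos.le k
  calc (N.choose k : ℝ) * p ^ k ≤ (N : ℝ) ^ k / k ! * p ^ k :=
        mul_le_mul_of_nonneg_right (Nat.choose_le_pow_div k N) (by positivity)
    _ ≤ (N : ℝ) ^ k * (exp 1 ^ k / k ^ k) * p ^ k := by
        rw [div_eq_mul_one_div ((N : ℝ) ^ k)]
        gcongr (N : ℝ) ^ k * ?_ * _
        rw [div_le_div_iff₀ (by positivity) (by positivity)]
        linarith
    _ = (exp 1 * N * p / k) ^ k := by
        rw [div_pow, mul_pow, mul_pow]; ring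

lemma eventually_choose_mul_rpow_pow_le {d : ℕ} {κ a : ℝ} (hκ : 0 < κ)
    (ha : (d : ℝ) - κ < a) :
    ∀ᶠ n : ℕ in atTop, (((2 * n + 1) ^ d).choose ⌊(n : ℝ) ^ κ⌋₊ : ℝ) *
      ((n : ℝ) ^ (-a)) ^ ⌊(n : ℝ) ^ κ⌋₊ ≤ (n : ℝ) ^ (-2 : ℝ) := by
  set c := (a - (d - κ)) / 2
  have hc : 0 < c := by simp only [c]; linarith
  have hpow (e : ℝ) (he : 0 < e) := (tendsto_rpow_atTop he).comp tendsto_natCast_atTop_atTop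
  filter_upwards [eventually_ge_atTop 1, (hpow κ hκ).eventually_ge_atTop (max 2 (4 / c)),
    (hpow c hc).eventually_ge_atTop (2 * exp 1 * 3 ^ d)] with n hn1 hnκ hnc
  simp only [Function.comp_apply] at hnκ hnc
  have hx1 : (1 : ℝ) ≤ n := by exact_mod_cast hn1
  set x : ℝ := (n : ℝ)
  set k := ⌊x ^ κ⌋₊
  have hx0 : 0 < x := by linarith
  have hk : x ^ κ / 2 ≤ k := by
    have := Nat.sub_one_lt_floor (x ^ κ); linarith [le_max_left 2 (4 / c)]
  have hbase : exp 1 * ((2 * n + 1) ^ d : ℕ) * x ^ (-a) / k ≤ x ^ (-c) := by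
    have hN : (((2 * n + 1) ^ d : ℕ) : ℝ) ≤ 3 ^ d * x ^ (d : ℝ) := by
      rw [rpow_natCast, ← mul_pow]; push_cast; gcongr; linarith
    calc exp 1 * ((2 * n + 1) ^ d : ℕ) * x ^ (-a) / k
        ≤ exp 1 * (3 ^ d * x ^ (d : ℝ)) * x ^ (-a) / (x ^ κ / 2) := by gcongr
      _ = 2 * exp 1 * 3 ^ d * x ^ (d - a - κ) := by
        rw [rpow_sub hx0, rpow_sub hx0, rpow_neg hx0.le]; field_simp
      _ ≤ x ^ c * x ^ (d - a - κ) := by gcongr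
      _ = x ^ (-c) := by rw [← rpow_add hx0]; congr 1; ring
  calc (((2 * n + 1) ^ d).choose k : ℝ) * (x ^ (-a)) ^ k
      ≤ (exp 1 * ((2 * n + 1) ^ d : ℕ) * x ^ (-a) / k) ^ k :=
        choose_mul_pow_le _ _ (by positivity)
    _ ≤ (x ^ (-c)) ^ k := by gcongr
    _ = x ^ (-(c * k)) := by rw [← rpow_natCast, ← rpow_mul hx0.le, neg_mul]
    _ ≤ x ^ (-2 : ℝ) := by
        gcongr
        have : 4 / c ≤ x ^ κ := le_of_max_le_right hnκ
        rw [div_le_iff₀ hc] at this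
        nlinarith

lemma choose_sub_mul_exp_pow_le {M k : ℕ} {q : ℝ} (hq : 0 ≤ q) (hk : 2 * k ≤ M) :
    (M.choose (M - (k - 1)) : ℝ) * exp (-q) ^ (M - (k - 1)) ≤ exp (k * log M - M * q / 2) := by
  rcases Nat.eq_zero_or_pos M with rfl | hM
  · obtain rfl : k = 0 := by omega
    simp
  have hchoose : (M.choose (M - (k - 1)) : ℝ) ≤ exp (k * log M) := by
    rw [exp_nat_mul, exp_log (by exact_mod_cast hM), Nat.choose_symm (by omega)]
    exact_mod_cast (Nat.choose_le_pow M (k - 1)).trans (Nat.pow_le_pow_right hM (by omega))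
  have hsub : (M : ℝ) / 2 ≤ (M - (k - 1) : ℕ) := by
    have : M ≤ 2 * (M - (k - 1)) := by omega
    rw [div_le_iff₀ two_pos]; exact_mod_cast (by linarith : M ≤ (M - (k - 1)) * 2)
  calc (M.choose (M - (k - 1)) : ℝ) * exp (-q) ^ (M - (k - 1))
      ≤ exp (k * log M) * exp (-(M * q / 2)) := by
        rw [← exp_nat_mul]
        gcongr
        nlinarith
    _ = exp (k * log M - M * q / 2) := by rw [← exp_add, sub_eq_add_neg]

lemma eventually_mul_rpow_mul_log_le {κ e : ℝ} (h : κ < e) (A : ℝ) {C : ℝ} (hC : 0 < C) :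
    ∀ᶠ x : ℝ in atTop, A * (x ^ κ * log x) ≤ C * x ^ e := by
  have hAC : 0 < C / (|A| + 1) := by positivity
  filter_upwards [(isLittleO_log_rpow_atTop (sub_pos.2 h)).bound hAC, eventually_ge_atTop 1]
    with x hlog hx
  have hx0 : 0 < x := by linarith
  rw [norm_of_nonneg (log_nonneg hx), norm_of_nonneg (by positivity)] at hlog
  calc A * (x ^ κ * log x) ≤ (|A| + 1) * (x ^ κ * log x) := by
        gcongr ?_ * _
        · exact mul_nonneg (by positivity) (log_nonneg hx)
        · linarith [le_abs_self A]
    _ ≤ (|A| + 1) * (x ^ κ * (C / (|A| + 1) * x ^ (e - κ))) := by gcongr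
    _ = C * x ^ e := by
        rw [rpow_sub hx0]; field_simp

lemma eventually_choose_sub_mul_exp_pow_le {d : ℕ} {κ b : ℝ} (hκ : 0 < κ) (hb0 : 0 ≤ b)
    (hb : b < d - κ) :
    ∀ᶠ n : ℕ in atTop,
      (((n / d + 1) ^ d).choose ((n / d + 1) ^ d - (⌊((n : ℝ) + 1) ^ κ⌋₊ - 1)) : ℝ) *
        exp (-(((n : ℝ) + 1) ^ (-b))) ^ ((n / d + 1) ^ d - (⌊((n : ℝ) + 1) ^ κ⌋₊ - 1))
        ≤ (n : ℝ) ^ (-2 : ℝ) := by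
  have hd : (0 : ℝ) < d := by linarith
  set D : ℝ := (d : ℝ) ^ (d : ℝ)
  have hsmall := eventually_mul_rpow_mul_log_le (by linarith : κ < d) (2 * 2 ^ κ)
    (by positivity : 0 < 1 / D)
  have hlarge := eventually_mul_rpow_mul_log_le (by linarith : κ < d - b) (2 * 2 ^ κ * d + 2)
    (by positivity : 0 < 2 ^ (-b) / (2 * D))
  filter_upwards [tendsto_natCast_atTop_atTop.eventually hsmall,
    tendsto_natCast_atTop_atTop.eventually hlarge, eventually_ge_atTop 3] with n hsmall hlarge hn3
  have hx3 : (3 : ℝ) ≤ n := by exact_mod_cast hn3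
  have hdiv : (n : ℝ) / d ≤ ((n / d : ℕ) : ℝ) + 1 := by
    rw [div_le_iff₀ hd]
    have := Nat.lt_div_mul_add (a := n) (b := d) (by exact_mod_cast hd)
    exact_mod_cast (by linarith : n ≤ (n / d + 1) * d)
  have hnd : ((n / d : ℕ) : ℝ) ≤ n := by exact_mod_cast Nat.div_le_self n d
  set x : ℝ := (n : ℝ)
  set M := (n / d + 1) ^ d
  set k := ⌊(x + 1) ^ κ⌋₊
  have hx0 : 0 < x := by linarith
  have hlogx : 1 ≤ log x := by
    rw [le_log_iff_exp_le hx0]; linarith [exp_one_lt_d9]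
  have hxκ : 1 ≤ x ^ κ := one_le_rpow (by linarith) hκ.le
  have hk : (k : ℝ) ≤ 2 ^ κ * x ^ κ := by
    rw [← mul_rpow two_pos.le hx0.le]
    exact (Nat.floor_le (by positivity)).trans (rpow_le_rpow (by positivity) (by linarith) hκ.le)
  have hMlo : x ^ (d : ℝ) / D ≤ M := by
    rw [← div_rpow hx0.le hd.le, rpow_natCast]
    push_cast [M]
    gcongr
  have hlogM : log M ≤ 2 * d * log x := by
    have hM : (M : ℝ) ≤ (x * x) ^ d := by
      push_cast [M]
      gcongr
      nlinarith
    calc log M ≤ log ((x * x) ^ d) := log_le_log (by positivity) hM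
      _ = 2 * d * log x := by rw [log_pow, log_mul hx0.ne' hx0.ne']; ring
  have hq : 2 ^ (-b) * x ^ (-b) ≤ (x + 1) ^ (-b) := by
    rw [← mul_rpow two_pos.le hx0.le]
    exact rpow_le_rpow_of_nonpos (by positivity) (by linarith) (by linarith)
  have h2k : 2 * k ≤ M := by
    have : (2 * k : ℝ) ≤ M := by
      calc (2 * k : ℝ) ≤ 2 * 2 ^ κ * (x ^ κ * log x) := by nlinarith
        _ ≤ 1 / D * x ^ (d : ℝ) := hsmall
        _ ≤ M := by rw [one_div_mul_eq_div]; exact hMlo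
    exact_mod_cast this
  calc _ ≤ exp (k * log M - M * (x + 1) ^ (-b) / 2) :=
        choose_sub_mul_exp_pow_le (by positivity) h2k
    _ ≤ exp (log x * (-2)) := by
        gcongr
        have hkM : k * log M ≤ 2 ^ κ * x ^ κ * (2 * d * log x) := by
          gcongr
        have hMq : 2 ^ (-b) / (2 * D) * x ^ ((d : ℝ) - b) ≤ M * (x + 1) ^ (-b) / 2 := by
          calc 2 ^ (-b) / (2 * D) * x ^ ((d : ℝ) - b)
              = x ^ (d : ℝ) / D * (2 ^ (-b) * x ^ (-b)) / 2 := by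
                rw [sub_eq_add_neg, rpow_add hx0]; field_simp
            _ ≤ M * (x + 1) ^ (-b) / 2 := by gcongr
        nlinarith
    _ = x ^ (-2 : ℝ) := (rpow_def_of_pos hx0 _).symm

lemma tendsto_div_rpow_of_forall_eventually_le {α : Type*} {l : Filter α} {f g : α → ℝ}
    {p : ℝ} {a b : ℕ → ℝ} (ha0 : ∀ j, 0 ≤ a j) (hb0 : ∀ j, 0 ≤ b j) (ha : Tendsto a atTop (𝓝 1))
    (hb : Tendsto b atTop (𝓝 1)) (hf : ∀ᶠ x in l, 0 < f x)
    (h : ∀ j, ∀ᶠ x in l, (a j * f x) ^ p ≤ g x ∧ g x ≤ (b j * f x) ^ p) :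
    Tendsto (fun x => g x / f x ^ p) l (𝓝 1) := by
  have hpow {c : ℕ → ℝ} (hc : Tendsto c atTop (𝓝 1)) :
      Tendsto (fun j => c j ^ p) atTop (𝓝 1) := by
    simpa using hc.rpow_const (Or.inl one_ne_zero)
  refine tendsto_order.2 ⟨fun u hu => ?_, fun u hu => ?_⟩
  · obtain ⟨j, hj⟩ := ((hpow ha).eventually (lt_mem_nhds hu)).exists
    filter_upwards [hf, h j] with x hfx hx
    rw [lt_div_iff₀ (by positivity)]
    calc u * f x ^ p < a j ^ p * f x ^ p := by gcongr
      _ = (a j * f x) ^ p := (mul_rpow (ha0 j) hfx.le).symm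
      _ ≤ g x := hx.1
  · obtain ⟨j, hj⟩ := ((hpow hb).eventually (gt_mem_nhds hu)).exists
    filter_upwards [hf, h j] with x hfx hx
    rw [div_lt_iff₀ (by positivity)]
    calc g x ≤ (b j * f x) ^ p := hx.2
      _ = b j ^ p * f x ^ p := mul_rpow (hb0 j) hfx.le
      _ < u * f x ^ p := by gcongr

section OrderStatistics

variable {d : ℕ} {γ κ : ℝ} {Ω : Type*} [MeasurableSpace Ω] {μ : Measure Ω}
  [IsProbabilityMeasure μ] {ξ : (Fin d → ℤ) → Ω → ℝ}

lemma ae_eventually_le_rpow_mul_log (hγ : 0 < γ) (hκ : 0 < κ) (hmeas : ∀ z, Measurable (ξ z))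
    (hindep : iIndepFun ξ μ)
    (hdist : ∀ z, IsWeibull μ (ξ z) γ) {a : ℝ} (ha0 : 0 ≤ a) (ha : (d : ℝ) - κ < a) (X : ℝ → Ω → ℝ)
    (hX : ∀ ω, ∀ᶠ r in atTop, ⌊r ^ κ⌋₊ ≤ {z ∈ ball d r | X r ω ≤ ξ z ω}.ncard) :
    ∀ᵐ ω ∂μ, ∀ᶠ r in atTop, X r ω ≤ (a * log r) ^ (1 / γ) := by
  have hBC : ∀ᵐ ω ∂μ, ∀ᶠ n : ℕ in atTop, ¬ ⌊(n : ℝ) ^ κ⌋₊ ≤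
      {z ∈ (cube d (-n) (2 * n + 1) : Set _) |
        ξ z ω ∈ Set.Ici ((a * log n) ^ (1 / γ))}.ncard := by
    refine ae_eventually_notMem_of_summable (summable_nat_rpow.2 (by norm_num : (-2 : ℝ) < -1))
      ?_
    filter_upwards [eventually_choose_mul_rpow_pow_le hκ ha, eventually_ge_atTop 1] with n hn hn1
    have hs : 0 ≤ a * log n := mul_nonneg ha0 (log_natCast_nonneg n)
    have hp : exp (-(a * log n)) = (n : ℝ) ^ (-a) := by
      rw [rpow_def_of_pos (by exact_mod_cast hn1)]; ring_nf
    refine (measure_le_ncard_le_choose_mul_pow hindep _ _ measurableSet_Ici (exp_pos _).le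
      fun z => ((hdist z).measure_ge_rpow_eq (hmeas z) hγ hs).le).trans ?_
    rw [card_cube, hp]
    exact ENNReal.ofReal_le_ofReal hn
  filter_upwards [hBC] with ω hω
  filter_upwards [tendsto_nat_floor_atTop.eventually hω, hX ω, eventually_ge_atTop 1]
    with r hr hXr hr1
  set n := ⌊r⌋₊
  have hn : (1 : ℝ) ≤ n := by exact_mod_cast Nat.le_floor (by exact_mod_cast hr1)
  have hnr : (n : ℝ) ≤ r := Nat.floor_le (by linarith)
  by_contra! hlt
  refine hr (le_trans (Nat.floor_mono (rpow_le_rpow (by linarith) hnr hκ.le))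
    (hXr.trans (Set.ncard_le_ncard (fun z hz => ⟨?_, ?_⟩) ((finite_toSet _).sep _))))
  · exact ball_subset_cube d (Nat.lt_floor_add_one r) hz.1
  · refine le_trans ?_ (hlt.trans_le hz.2).le
    gcongr

lemma ae_eventually_rpow_mul_log_le (hγ : 0 < γ) (hκ : 0 < κ) (hindep : iIndepFun ξ μ)
    (hdist : ∀ z, IsWeibull μ (ξ z) γ) {b : ℝ} (hb0 : 0 ≤ b) (hb : b < d - κ) (X : ℝ → Ω → ℝ)
    (hX : ∀ ω, ∀ᶠ r in atTop, {z ∈ ball d r | X r ω < ξ z ω}.ncard < ⌊r ^ κ⌋₊) :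
    ∀ᵐ ω ∂μ, ∀ᶠ r in atTop, (b * log r) ^ (1 / γ) ≤ X r ω := by
  -- i.e. at least `⌊(n + 1) ^ κ⌋₊` cube sites reach the threshold; counting the sites below it
  -- lets the union bound over subsets apply
  have hBC : ∀ᵐ ω ∂μ, ∀ᶠ n : ℕ in atTop,
      ¬ #(cube d 0 (n / d + 1)) - (⌊((n : ℝ) + 1) ^ κ⌋₊ - 1) ≤
      {z ∈ (cube d 0 (n / d + 1) : Set _) |
        ξ z ω ∈ Set.Iio ((b * log ((n : ℝ) + 1)) ^ (1 / γ))}.ncard := by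
    refine ae_eventually_notMem_of_summable (summable_nat_rpow.2 (by norm_num : (-2 : ℝ) < -1))
      ?_
    filter_upwards [eventually_choose_sub_mul_exp_pow_le hκ hb0 hb] with n hn
    have hs : 0 ≤ b * log ((n : ℝ) + 1) :=
      mul_nonneg hb0 (log_nonneg (by linarith [n.cast_nonneg (α := ℝ)]))
    have hq : exp (-(b * log ((n : ℝ) + 1))) = ((n : ℝ) + 1) ^ (-b) := by
      rw [rpow_def_of_pos (by positivity)]; ring_nf
    refine (measure_le_ncard_le_choose_mul_pow hindep _ _ measurableSet_Iio (exp_pos _).le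
      fun z => (hdist z).measure_lt_rpow_le hγ hs).trans ?_
    rw [card_cube, hq]
    exact ENNReal.ofReal_le_ofReal hn
  filter_upwards [hBC] with ω hω
  filter_upwards [tendsto_nat_floor_atTop.eventually hω, hX ω, eventually_ge_atTop 1]
    with r hr hXr hr1
  set n := ⌊r⌋₊
  have hrn : r < n + 1 := Nat.lt_floor_add_one r
  have hlog : (b * log r) ^ (1 / γ) ≤ (b * log ((n : ℝ) + 1)) ^ (1 / γ) := by
    have := log_nonneg hr1
    gcongr
  by_contra! hlt
  set s := (b * log ((n : ℝ) + 1)) ^ (1 / γ)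
  have hsplit := Set.ncard_inter_add_ncard_sdiff_eq_ncard (cube d 0 (n / d + 1) : Set _)
    {z | ξ z ω < s} (finite_toSet _)
  have hhigh :
      ((cube d 0 (n / d + 1) : Set _) \ {z | ξ z ω < s}).ncard < ⌊((n : ℝ) + 1) ^ κ⌋₊ := by
    refine lt_of_le_of_lt (Set.ncard_le_ncard (t := {z ∈ ball d r | X r ω < ξ z ω})
      (fun z hz => ⟨?_, ?_⟩) ((ball_finite d r).sep _))
      (hXr.trans_le (Nat.floor_mono (rpow_le_rpow (by linarith) hrn.le hκ.le)))
    · exact ball_mono d (Nat.floor_le (by linarith)) (cube_subset_ball d n hz.1)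
    · exact hlt.trans_le (hlog.trans (not_lt.1 hz.2))
  rw [Set.ncard_coe_finset] at hsplit
  change ¬ _ ≤ ((cube d 0 (n / d + 1) : Set _) ∩ {z | ξ z ω < s}).ncard at hr
  omega

end OrderStatistics

end WeibullOrderStatistic

open WeibullOrderStatistic

theorem weibull_order_statistic_asymptotics_general
    (d : ℕ) (γ : ℝ) (hγ : 0 < γ) (κ : ℝ) (hκ : 0 < κ) (hκd : κ < d)
    {Ω : Type*} [MeasurableSpace Ω] (μ : Measure Ω) [IsProbabilityMeasure μ]
    (ξ : (Fin d → ℤ) → Ω → ℝ)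
    (hmeas : ∀ z, Measurable (ξ z))
    (hindep : iIndepFun ξ μ)
    (hdist : ∀ z, ∀ x : ℝ, 0 ≤ x →
      μ {ω | ξ z ω < x} = ENNReal.ofReal (1 - exp (-(x ^ γ))))
    (X : ℝ → Ω → ℝ)
    (hX : ∀ ω, ∀ r ≥ (2 : ℝ),
      (∃ z : Fin d → ℤ, ((∑ i, |z i| : ℤ) : ℝ) ≤ r ∧ ξ z ω = X r ω) ∧
      ⌊r ^ κ⌋₊ ≤ {z : Fin d → ℤ | ((∑ i, |z i| : ℤ) : ℝ) ≤ r ∧ X r ω ≤ ξ z ω}.ncard ∧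
      {z : Fin d → ℤ | ((∑ i, |z i| : ℤ) : ℝ) ≤ r ∧ X r ω < ξ z ω}.ncard < ⌊r ^ κ⌋₊) :
    ∀ᵐ ω ∂μ, Tendsto (fun r => X r ω / (((d : ℝ) - κ) * log r) ^ (1 / γ))
      atTop (nhds 1) := by
  have hdκ : 0 < (d : ℝ) - κ := sub_pos.2 hκd
  have hX' (ω : Ω) := (eventually_ge_atTop 2).mono fun r hr => hX ω r hr
  have hε (j : ℕ) : 0 < 1 / ((j : ℝ) + 1) ∧ 1 / ((j : ℝ) + 1) ≤ 1 :=
    ⟨by positivity, div_le_one_of_le₀ (by linarith [j.cast_nonneg (α := ℝ)]) (by positivity)⟩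
  have hup (j : ℕ) : ∀ᵐ ω ∂μ, ∀ᶠ r in atTop,
      X r ω ≤ ((1 + 1 / ((j : ℝ) + 1)) * ((d - κ) * log r)) ^ (1 / γ) := by
    simpa only [mul_assoc] using ae_eventually_le_rpow_mul_log hγ hκ hmeas hindep hdist
      (by nlinarith [hε j]) (lt_mul_of_one_lt_left hdκ (by linarith [hε j])) X
      fun ω => (hX' ω).mono fun r h => h.2.1
  have hlo (j : ℕ) : ∀ᵐ ω ∂μ, ∀ᶠ r in atTop,
      ((1 - 1 / ((j : ℝ) + 1)) * ((d - κ) * log r)) ^ (1 / γ) ≤ X r ω := by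
    simpa only [mul_assoc] using ae_eventually_rpow_mul_log_le hγ hκ hindep hdist
      (by nlinarith [hε j]) (mul_lt_of_lt_one_left hdκ (by linarith [hε j])) X
      fun ω => (hX' ω).mono fun r h => h.2.2
  filter_upwards [ae_all_iff.2 hup, ae_all_iff.2 hlo] with ω hu hl
  refine tendsto_div_rpow_of_forall_eventually_le (fun j => by linarith [hε j])
    (fun j => by linarith [hε j]) ?_ ?_ ?_ fun j => (hl j).and (hu j)
  · simpa using tendsto_one_div_add_atTop_nhds_zero_nat.const_sub (1 : ℝ)
  · simpa using tendsto_one_div_add_atTop_nhds_zero_nat.const_add (1 : ℝ)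
  · filter_upwards [eventually_gt_atTop 1] with r hr using mul_pos hdκ (log_pos hr)

/-- For i.i.d. Weibull(γ) potentials on `ℤ^d` and `κ ∈ (0,d)`, the `⌊r^κ⌋`-th largest
value `ξ_r^{(⌊r^κ⌋)}` of `ξ` over the ℓ¹-ball of radius `r` satisfies, almost surely,
`ξ_r^{(⌊r^κ⌋)} ∼ ((d-κ) log r)^{1/γ}` as `r → ∞`. -/
theorem weibull_order_statistic_asymptotics
    (d : ℕ) (hd : 1 ≤ d) (γ : ℝ) (hγ : 0 < γ) (κ : ℝ) (hκ : 0 < κ) (hκd : κ < d)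
    {Ω : Type*} [MeasurableSpace Ω] (μ : Measure Ω) [IsProbabilityMeasure μ]
    (ξ : (Fin d → ℤ) → Ω → ℝ)
    (hmeas : ∀ z, Measurable (ξ z))
    (hindep : iIndepFun ξ μ)
    (hdist : ∀ z, ∀ x : ℝ, 0 ≤ x →
      μ {ω | ξ z ω < x} = ENNReal.ofReal (1 - exp (-(x ^ γ))))
    (X : ℝ → Ω → ℝ)
    (hX : ∀ ω, ∀ r ≥ (2 : ℝ),
      (∃ z : Fin d → ℤ, ((∑ i, |z i| : ℤ) : ℝ) ≤ r ∧ ξ z ω = X r ω) ∧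
      ⌊r ^ κ⌋₊ ≤ {z : Fin d → ℤ | ((∑ i, |z i| : ℤ) : ℝ) ≤ r ∧ X r ω ≤ ξ z ω}.ncard ∧
      {z : Fin d → ℤ | ((∑ i, |z i| : ℤ) : ℝ) ≤ r ∧ X r ω < ξ z ω}.ncard < ⌊r ^ κ⌋₊) :
    ∀ᵐ ω ∂μ, Tendsto (fun r => X r ω / (((d : ℝ) - κ) * log r) ^ (1 / γ))
      atTop (nhds 1) :=
  weibull_order_statistic_asymptotics_general d γ hγ κ hκ hκd μ ξ hmeas hindep hdist X hX
end
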